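/- arXiv:2212.14620 — 3 statements merged into one kernel-verified Lean document; each statement's English description precedes it below -/
import Mathlib

section
/- Diagonal evaluation of the complete sum of a product of Kloosterman sums: Let q₁, q₂ be positive integers and let h₁, h₂ be integers with gcd(h₁, q₁) = 1 and gcd(h₂, q₂) = 1; let h̄₁ be an integer inverse of h₁ modulo q₁ and h̄₂ an integer inverse of h₂ modulo q₂. Then Σ_{β=0}^{q₁q₂−1} S(h̄₁, β; q₁) · S(h̄₂, β; q₂) equals 0 if q₁ ≠ q₂, and equals q₁² · c_{q₁}(h̄₁ − h̄₂) if q₁ = q₂. -/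
/-- `e(x) = e^{2πix}`. -/
noncomputable def e2pi (x : ℝ) : ℂ := Complex.exp (2 * Real.pi * Complex.I * x)

/-- The Kloosterman sum `S(a,b;c) = ∑_{x mod c, gcd(x,c)=1} e((a·x + b·x̄)/c)`,
where `x̄` is a multiplicative inverse of `x` modulo `c`. -/
noncomputable def kloosterman (a b : ℤ) (c : ℕ) : ℂ :=
  ∑ x ∈ (Finset.range c).filter (fun x => Nat.Coprime x c),
    e2pi (((a * (x : ℤ) + b * ((((x : ZMod c)⁻¹ : ZMod c).val : ℕ) : ℤ) : ℤ) : ℝ) / (c : ℝ))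

/-- The Ramanujan sum `c_q(n) = ∑_{x mod q, gcd(x,q)=1} e(n·x/q)`. -/
noncomputable def ramanujanSum (q : ℕ) (n : ℤ) : ℂ :=
  ∑ x ∈ (Finset.range q).filter (fun x => Nat.Coprime x q),
    e2pi (((n * (x : ℤ) : ℤ) : ℝ) / (q : ℝ))


/-! Opening both Kloosterman sums, the sum over `β` becomes, for each pair `x, y` of units,
a complete geometric sum modulo `q₁ q₂` of frequency `x̄ q₂ + ȳ q₁`; it equals `q₁ q₂` when
`q₁ q₂` divides that frequency and `0` otherwise. Since `x̄` is prime to `q₁`, divisibility forces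
`q₁ ∣ q₂`, and symmetrically `q₂ ∣ q₁`, so nothing survives unless `q₁ = q₂ = q`. Then the
condition reads `x̄ + ȳ ≡ 0`, that is `y ≡ -x (mod q)`, and the remaining sum over `x` is the
Ramanujan sum. -/

open Finset

lemma e2pi_add (x y : ℝ) : e2pi (x + y) = e2pi x * e2pi y := by
  rw [e2pi, e2pi, e2pi, ← Complex.exp_add]
  push_cast
  ring_nf

lemma e2pi_intCast (n : ℤ) : e2pi n = 1 := by
  rw [e2pi, ← Complex.exp_int_mul_two_pi_mul_I n]
  push_cast
  ring_nf

lemma e2pi_pow (x : ℝ) (n : ℕ) : e2pi x ^ n = e2pi (n * x) := by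
  rw [e2pi, e2pi, ← Complex.exp_nat_mul]
  push_cast
  ring_nf

lemma e2pi_intCast_div_congr {q : ℕ} {a b : ℤ} (h : a ≡ b [ZMOD q]) :
    e2pi (a / q) = e2pi (b / q) := by
  rcases eq_or_ne q 0 with rfl | hq
  · rw [Int.modEq_zero_iff.1 h]
  obtain ⟨k, hk⟩ := Int.modEq_iff_dvd.1 h.symm
  have hshift : (a : ℝ) / q = b / q + k := by
    rw [show a = b + q * k by linarith]
    push_cast
    field_simp
  rw [hshift, e2pi_add, e2pi_intCast, mul_one]

lemma e2pi_intCast_div_eq_one_iff {q : ℕ} (hq : q ≠ 0) (m : ℤ) :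
    e2pi (m / q) = 1 ↔ (q : ℤ) ∣ m := by
  rw [e2pi, Complex.exp_eq_one_iff]
  constructor
  · rintro ⟨n, hn⟩
    field_simp at hn
    have hr : (m : ℝ) = q * n := by
      rw [mul_comm, ← div_eq_iff (Nat.cast_ne_zero.2 hq)]
      exact_mod_cast hn
    exact ⟨n, by exact_mod_cast hr⟩
  · rintro ⟨n, rfl⟩
    exact ⟨n, by push_cast; field_simp⟩

lemma sum_range_e2pi_mul_div {N : ℕ} (hN : N ≠ 0) (m : ℤ) :
    ∑ β ∈ range N, e2pi ((m * β : ℤ) / N) = if (N : ℤ) ∣ m then (N : ℂ) else 0 := by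
  have hpow : ∀ β : ℕ, e2pi ((m * β : ℤ) / N) = e2pi (m / N) ^ β := fun β => by
    rw [e2pi_pow]
    push_cast
    ring_nf
  simp_rw [hpow]
  split_ifs with hdvd
  · simp [(e2pi_intCast_div_eq_one_iff hN m).2 hdvd]
  · have hroot : e2pi (m / N) ^ N = 1 := by
      rw [e2pi_pow, mul_div_cancel₀ _ (Nat.cast_ne_zero.2 hN), e2pi_intCast]
    rw [geom_sum_eq (mt (e2pi_intCast_div_eq_one_iff hN m).1 hdvd), hroot, sub_self, zero_div]

/-- The `x̄` of `kloosterman`: the representative in `[0, c)` of the inverse of `x` modulo `c`. -/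
def invMod (c x : ℕ) : ℕ := ((x : ZMod c)⁻¹).val

def unitReps (c : ℕ) : Finset ℕ := (range c).filter (fun x => Nat.Coprime x c)

lemma kloosterman_eq_sum (a b : ℤ) (c : ℕ) :
    kloosterman a b c = ∑ x ∈ unitReps c, e2pi ((a * x + b * invMod c x : ℤ) / c) :=
  rfl

lemma coprime_invMod {c x : ℕ} (hx : x.Coprime c) : (invMod c x).Coprime c := by
  obtain ⟨u, hu⟩ := (ZMod.isUnit_iff_coprime x c).2 hx
  rw [invMod, ← hu, ZMod.inv_coe_unit]
  exact ZMod.val_coe_unit_coprime u⁻¹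

lemma intCast_invMod (c x : ℕ) [NeZero c] : ((invMod c x : ℤ) : ZMod c) = (x : ZMod c)⁻¹ := by
  rw [Int.cast_natCast, invMod, ZMod.natCast_zmod_val]

lemma ZMod.inv_add_inv_eq_zero_iff {n : ℕ} {u v : ZMod n} (hu : IsUnit u) (hv : IsUnit v) :
    u⁻¹ + v⁻¹ = 0 ↔ u + v = 0 := by
  have hu' := ZMod.mul_inv_of_unit u hu
  have hv' := ZMod.mul_inv_of_unit v hv
  constructor
  · intro h
    linear_combination (u * v) * h - v * hu' - u * hv'
  · intro h
    linear_combination (u⁻¹ * v⁻¹) * h - v⁻¹ * hu' - u⁻¹ * hv'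

section KloostermanProduct

variable {q₁ q₂ : ℕ}

lemma kloosterman_mul_kloosterman (hq₁ : q₁ ≠ 0) (hq₂ : q₂ ≠ 0) (a₁ a₂ β : ℤ) :
    kloosterman a₁ β q₁ * kloosterman a₂ β q₂ =
      ∑ x ∈ unitReps q₁, ∑ y ∈ unitReps q₂,
        e2pi ((a₁ * x : ℤ) / q₁) * e2pi ((a₂ * y : ℤ) / q₂) *
          e2pi (((invMod q₁ x * q₂ + invMod q₂ y * q₁) * β : ℤ) / (q₁ * q₂ : ℕ)) := by
  rw [kloosterman_eq_sum, kloosterman_eq_sum, sum_mul_sum]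
  refine sum_congr rfl fun x _ => sum_congr rfl fun y _ => ?_
  simp only [← e2pi_add]
  congr 1
  push_cast
  field_simp
  ring

lemma sum_range_kloosterman_mul_kloosterman (hq₁ : q₁ ≠ 0) (hq₂ : q₂ ≠ 0) (a₁ a₂ : ℤ) :
    ∑ β ∈ range (q₁ * q₂), kloosterman a₁ β q₁ * kloosterman a₂ β q₂ =
      ∑ x ∈ unitReps q₁, ∑ y ∈ unitReps q₂,
        e2pi ((a₁ * x : ℤ) / q₁) * e2pi ((a₂ * y : ℤ) / q₂) *
          if ((q₁ * q₂ : ℕ) : ℤ) ∣ invMod q₁ x * q₂ + invMod q₂ y * q₁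
          then ((q₁ * q₂ : ℕ) : ℂ) else 0 := by
  simp_rw [kloosterman_mul_kloosterman hq₁ hq₂]
  rw [sum_comm]
  refine sum_congr rfl fun x _ => ?_
  rw [sum_comm]
  refine sum_congr rfl fun y _ => ?_
  rw [← mul_sum, sum_range_e2pi_mul_div (Nat.mul_ne_zero hq₁ hq₂)]

lemma eq_of_dvd_invMod_mul_add_invMod_mul {x y : ℕ} (hx : x.Coprime q₁) (hy : y.Coprime q₂)
    (h : ((q₁ * q₂ : ℕ) : ℤ) ∣ invMod q₁ x * q₂ + invMod q₂ y * q₁) : q₁ = q₂ := by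
  have h₁ : (q₁ : ℤ) ∣ invMod q₁ x * q₂ :=
    (dvd_add_left (dvd_mul_left _ _)).1 (dvd_trans (by push_cast; exact dvd_mul_right _ _) h)
  have h₂ : (q₂ : ℤ) ∣ invMod q₂ y * q₁ :=
    (dvd_add_right (dvd_mul_left _ _)).1 (dvd_trans (by push_cast; exact dvd_mul_left _ _) h)
  exact Nat.dvd_antisymm
    ((coprime_invMod hx).symm.dvd_of_dvd_mul_left (by exact_mod_cast h₁))
    ((coprime_invMod hy).symm.dvd_of_dvd_mul_left (by exact_mod_cast h₂))

lemma sum_range_kloosterman_mul_kloosterman_of_ne (hq₁ : q₁ ≠ 0) (hq₂ : q₂ ≠ 0)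
    (hne : q₁ ≠ q₂) (a₁ a₂ : ℤ) :
    ∑ β ∈ range (q₁ * q₂), kloosterman a₁ β q₁ * kloosterman a₂ β q₂ = 0 := by
  rw [sum_range_kloosterman_mul_kloosterman hq₁ hq₂]
  refine sum_eq_zero fun x hx => sum_eq_zero fun y hy => ?_
  rw [if_neg (hne ∘ eq_of_dvd_invMod_mul_add_invMod_mul (mem_filter.1 hx).2 (mem_filter.1 hy).2),
    mul_zero]

lemma dvd_invMod_add_invMod_iff {q x y : ℕ} [NeZero q] (hx : x.Coprime q) (hy : y.Coprime q) :
    (q : ℤ) ∣ invMod q x + invMod q y ↔ (y : ZMod q) = -x := by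
  rw [← ZMod.intCast_zmod_eq_zero_iff_dvd, Int.cast_add, intCast_invMod, intCast_invMod,
    ZMod.inv_add_inv_eq_zero_iff ((ZMod.isUnit_iff_coprime x q).2 hx)
      ((ZMod.isUnit_iff_coprime y q).2 hy), add_eq_zero_iff_eq_neg']

lemma val_neg_mem_unitReps {q x : ℕ} [NeZero q] (hx : x.Coprime q) :
    (-(x : ZMod q)).val ∈ unitReps q := by
  refine mem_filter.2 ⟨mem_range.2 (ZMod.val_lt _), ?_⟩
  rw [← ZMod.isUnit_iff_coprime, ZMod.natCast_zmod_val]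
  exact ((ZMod.isUnit_iff_coprime x q).2 hx).neg

lemma sum_range_kloosterman_mul_kloosterman_self {q : ℕ} (hq : q ≠ 0) (a₁ a₂ : ℤ) :
    ∑ β ∈ range (q * q), kloosterman a₁ β q * kloosterman a₂ β q =
      (q : ℂ) ^ 2 * ramanujanSum q (a₁ - a₂) := by
  have : NeZero q := ⟨hq⟩
  rw [sum_range_kloosterman_mul_kloosterman hq hq, ramanujanSum, mul_sum]
  refine sum_congr rfl fun x hx => ?_
  have hx : x.Coprime q := (mem_filter.1 hx).2
  set y₀ := (-(x : ZMod q)).val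
  have hy₀ : (y₀ : ZMod q) = -x := ZMod.natCast_zmod_val _
  have hcond : ∀ y ∈ unitReps q,
      ((q * q : ℕ) : ℤ) ∣ invMod q x * q + invMod q y * q ↔ y = y₀ := by
    intro y hy
    obtain ⟨hy_lt, hy⟩ := mem_filter.1 hy
    rw [Nat.cast_mul, ← add_mul, mul_dvd_mul_iff_right (by exact_mod_cast hq),
      dvd_invMod_add_invMod_iff hx hy, ← (ZMod.val_injective q).eq_iff,
      ZMod.val_cast_of_lt (mem_range.1 hy_lt)]
  rw [sum_congr rfl fun y hy => by rw [if_congr (hcond y hy) rfl rfl, mul_ite, mul_zero],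
    sum_ite_eq', if_pos (val_neg_mem_unitReps hx)]
  have hshift : a₂ * (y₀ : ℤ) ≡ -(a₂ * x) [ZMOD q] := by
    rw [← ZMod.intCast_eq_intCast_iff]
    push_cast
    rw [hy₀, mul_neg]
  rw [e2pi_intCast_div_congr hshift, ← e2pi_add]
  push_cast
  ring_nf

end KloostermanProduct

theorem diagonal_kloosterman_pair_sum_general (q₁ q₂ : ℕ) (hq₁ : 0 < q₁) (hq₂ : 0 < q₂)
    (hb₁ hb₂ : ℤ) :
    (∑ β ∈ Finset.range (q₁ * q₂), kloosterman hb₁ (β : ℤ) q₁ * kloosterman hb₂ (β : ℤ) q₂)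
      = if q₁ = q₂ then (q₁ : ℂ) ^ 2 * ramanujanSum q₁ (hb₁ - hb₂) else 0 := by
  split_ifs with hq
  · subst hq
    exact sum_range_kloosterman_mul_kloosterman_self hq₁.ne' hb₁ hb₂
  · exact sum_range_kloosterman_mul_kloosterman_of_ne hq₁.ne' hq₂.ne' hq hb₁ hb₂

/-- Diagonal evaluation of the complete sum of a product of Kloosterman sums:
`∑_{β=0}^{q₁q₂−1} S(h̄₁, β; q₁) · S(h̄₂, β; q₂)` is `0` if `q₁ ≠ q₂`, and is
`q₁² · c_{q₁}(h̄₁ − h̄₂)` if `q₁ = q₂`. -/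
theorem diagonal_kloosterman_pair_sum (q₁ q₂ : ℕ) (hq₁ : 0 < q₁) (hq₂ : 0 < q₂)
    (h₁ h₂ : ℤ) (hc₁ : Int.gcd h₁ (q₁ : ℤ) = 1) (hc₂ : Int.gcd h₂ (q₂ : ℤ) = 1)
    (hb₁ hb₂ : ℤ) (hhb₁ : h₁ * hb₁ ≡ 1 [ZMOD (q₁ : ℤ)]) (hhb₂ : h₂ * hb₂ ≡ 1 [ZMOD (q₂ : ℤ)]) :
    (∑ β ∈ Finset.range (q₁ * q₂), kloosterman hb₁ (β : ℤ) q₁ * kloosterman hb₂ (β : ℤ) q₂)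
      = if q₁ = q₂ then (q₁ : ℂ) ^ 2 * ramanujanSum q₁ (hb₁ - hb₂) else 0 :=
  diagonal_kloosterman_pair_sum_general q₁ q₂ hq₁ hq₂ hb₁ hb₂
end

section
/- First derivative bound for oscillatory integrals: Let a < b be real numbers, let Λ > 0, and let f : [a,b] → ℝ be differentiable with f' monotone on [a,b] and |f'(x)| ≥ Λ for all x ∈ [a,b]. Then |∫_a^ب e(f(x)) dx| ≤ 2/Λ, i.e. the modulus of ∫_a^b e^{2πi f(x)} dx is at most 2/Λ. -/
/-! Write `e(f) = (1 / f') • (f' e(f))`, an integral of `f' e(f)` against the monotone weight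
`1 / f'` with values in `(0, 1 / Λ]`. By the layer-cake formula this is an integral over
`t ∈ (0, 1 / Λ]` of the integrals of `f' e(f)` over the superlevel sets `{1 / f' > t}`, which are
intervals; over an interval `[p, q]` the integral of `f' e(f)` is `(e(f q) - e(f p)) / (2πi)`, of
norm at most `1 / π`. This gives `1 / (πΛ) ≤ 2 / Λ`. By Darboux's theorem `f'` has constant sign,
and the case `f' < 0` follows by complex conjugation. -/

open MeasureTheory Set

theorem integral_smul_eq_setIntegral_Ioc_setIntegral_lt {α E : Type*} [MeasurableSpace α]
    [NormedAddCommGroup E] [NormedSpace ℝ E] [CompleteSpace E] {μ : Measure α} [SFinite μ]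
    {g : α → E} {w : α → ℝ} {W : ℝ} (hg : Integrable g μ) (hw : Measurable w) (hw0 : ∀ x, 0 ≤ w x)
    (hwW : ∀ x, w x ≤ W) :
    ∫ x, w x • g x ∂μ = ∫ t in Ioc 0 W, ∫ x in {x | t < w x}, g x ∂μ := by
  have hlevel : ∀ t, MeasurableSet {x | t < w x} := fun t => measurableSet_lt measurable_const hw
  have hprod : Integrable (Function.uncurry fun t x => {x | t < w x}.indicator g x)
      ((volume.restrict (Ioc 0 W)).prod μ) :=
    (hg.comp_snd _).indicator (measurableSet_lt measurable_fst (hw.comp measurable_snd))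
  simp_rw [← integral_indicator (hlevel _)]
  rw [integral_integral_swap hprod]
  refine integral_congr_ae (Filter.Eventually.of_forall fun x => ?_)
  have hslice : Ioc 0 W ∩ Iio (w x) = Ioo 0 (w x) := by
    have := hwW x
    ext t
    simp only [mem_inter_iff, mem_Ioc, mem_Iio, mem_Ioo]
    grind
  change w x • g x = ∫ t in Ioc 0 W, (Iio (w x)).indicator (fun _ => g x) t
  rw [integral_indicator measurableSet_Iio, Measure.restrict_restrict measurableSet_Iio,
    inter_comm, hslice, integral_const, measureReal_restrict_apply_univ,
    Real.volume_real_Ioo_of_le (hw0 x), sub_zero]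

theorem Set.OrdConnected.ae_eq_Ioc_csInf_csSup {s : Set ℝ} (hs : s.OrdConnected)
    (hne : s.Nonempty) (hbdd : BddBelow s) (hbdd' : BddAbove s) :
    s =ᵐ[volume] Ioc (sInf s) (sSup s) :=
  ((subset_Icc_csInf_csSup hbdd hbdd').eventuallyLE.antisymm <| Ioo_ae_eq_Icc.symm.le.trans
    (IsConnected.Ioo_csInf_csSup_subset ⟨hne, hs.isPreconnected⟩ hbdd hbdd').eventuallyLE).trans
    Ioc_ae_eq_Icc.symm

theorem Set.OrdConnected.norm_setIntegral_le {E : Type*} [NormedAddCommGroup E] [NormedSpace ℝ E]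
    {s : Set ℝ} {a b M : ℝ} {g : ℝ → E} (hs : s.OrdConnected) (hsab : s ⊆ Icc a b) (hab : a ≤ b)
    (hM : ∀ p q, a ≤ p → p ≤ q → q ≤ b → ‖∫ x in p..q, g x‖ ≤ M) :
    ‖∫ x in s, g x‖ ≤ M := by
  rcases s.eq_empty_or_nonempty with rfl | hne
  · simpa using hM a a le_rfl le_rfl hab
  have hbdd : BddBelow s := ⟨a, fun x hx => (hsab hx).1⟩
  have hbdd' : BddAbove s := ⟨b, fun x hx => (hsab hx).2⟩
  have hle : sInf s ≤ sSup s := csInf_le_csSup hne hbdd hbdd'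
  rw [setIntegral_congr_set (hs.ae_eq_Ioc_csInf_csSup hne hbdd hbdd'),
    ← intervalIntegral.integral_of_le hle]
  exact hM _ _ (le_csInf hne fun x hx => (hsab hx).1) hle (csSup_le hne fun x hx => (hsab hx).2)

theorem norm_intervalIntegral_smul_le_of_monotoneOn_or_antitoneOn {E : Type*}
    [NormedAddCommGroup E] [NormedSpace ℝ E] [CompleteSpace E] {a b W M : ℝ} {g : ℝ → E}
    {w : ℝ → ℝ} (hab : a ≤ b)
    (hg : IntervalIntegrable g volume a b) (hw : MonotoneOn w (Icc a b) ∨ AntitoneOn w (Icc a b))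
    (hw0 : ∀ x ∈ Icc a b, 0 ≤ w x) (hwW : ∀ x ∈ Icc a b, w x ≤ W)
    (hM : ∀ p q, a ≤ p → p ≤ q → q ≤ b → ‖∫ x in p..q, g x‖ ≤ M) :
    ‖∫ x in a..b, w x • g x‖ ≤ W * M := by
  set v := IccExtend hab ((Icc a b).domRestrict w)
  have hv_eq : EqOn v w (Icc a b) := fun x hx => IccExtend_of_mem hab _ hx
  have hv_mem : ∀ x, 0 ≤ v x ∧ v x ≤ W := fun x =>
    ⟨hw0 _ (projIcc a b hab x).2, hwW _ (projIcc a b hab x).2⟩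
  have hv_mono : Monotone v ∨ Antitone v := hw.imp
    (fun h => (monotoneOn_iff_monotone.1 h).IccExtend hab)
    (fun h => (antitoneOn_iff_antitone.1 h).comp_monotone (monotone_projIcc hab))
  have hv : Measurable v := hv_mono.elim Monotone.measurable Antitone.measurable
  have hlevel : ∀ t, {x | t < v x}.OrdConnected := fun t =>
    hv_mono.elim ordConnected_Ioi.preimage_mono ordConnected_Ioi.preimage_anti
  have hW : 0 ≤ W := (hv_mem a).1.trans (hv_mem a).2
  calc ‖∫ x in a..b, w x • g x‖ = ‖∫ x in Ioc a b, v x • g x‖ := by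
        rw [intervalIntegral.integral_of_le hab,
          setIntegral_congr_fun measurableSet_Ioc fun x hx => by
            rw [← hv_eq (Ioc_subset_Icc_self hx)]]
    _ = ‖∫ t in Ioc 0 W, ∫ x in {x | t < v x} ∩ Ioc a b, g x‖ := by
        rw [integral_smul_eq_setIntegral_Ioc_setIntegral_lt hg.1 hv (fun x => (hv_mem x).1)
          (fun x => (hv_mem x).2)]
        simp only [Measure.restrict_restrict (measurableSet_lt measurable_const hv)]
    _ ≤ M * volume.real (Ioc 0 W) := norm_setIntegral_le_of_norm_le_const measure_Ioc_lt_top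
        fun t _ => ((hlevel t).inter ordConnected_Ioc).norm_setIntegral_le
          (inter_subset_right.trans Ioc_subset_Icc_self) hab hM
    _ = W * M := by rw [Real.volume_real_Ioc_of_le hW, sub_zero, mul_comm]

open Complex Real

theorem norm_cexp_two_pi_I_mul_ofReal (r : ℝ) : ‖cexp (2 * π * I * r)‖ = 1 := by
  rw [norm_exp]
  norm_num [mul_re, mul_im]

theorem cexp_two_pi_I_mul_ofReal_neg (r : ℝ) :
    cexp (2 * π * I * ↑(-r)) = (starRingEnd ℂ) (cexp (2 * π * I * r)) := by
  rw [← exp_conj]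
  simp [map_ofNat]

section Oscillatory

variable {f f' : ℝ → ℝ} {p q : ℝ}

theorem intervalIntegrable_ofReal_mul_cexp (hf : ContinuousOn f (uIcc p q))
    (hf' : IntervalIntegrable f' volume p q) :
    IntervalIntegrable (fun x => (f' x : ℂ) * cexp (2 * π * I * f x)) volume p q :=
  IntervalIntegrable.mul_continuousOn ⟨hf'.1.ofReal, hf'.2.ofReal⟩ <|
    continuous_exp.comp_continuousOn <|
      continuousOn_const.mul (continuous_ofReal.comp_continuousOn hf)

theorem norm_integral_ofReal_mul_cexp_le (hderiv : ∀ x ∈ uIcc p q, HasDerivAt f (f' x) x)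
    (hf' : IntervalIntegrable f' volume p q) :
    ‖∫ x in p..q, (f' x : ℂ) * cexp (2 * π * I * f x)‖ ≤ π⁻¹ := by
  have hf : ContinuousOn f (uIcc p q) := fun x hx => (hderiv x hx).continuousAt.continuousWithinAt
  have hftc : ∫ x in p..q, 2 * π * I * ((f' x : ℂ) * cexp (2 * π * I * f x)) =
      cexp (2 * π * I * f q) - cexp (2 * π * I * f p) := by
    refine intervalIntegral.integral_eq_sub_of_hasDerivAt (f := fun x => cexp (2 * π * I * f x))
      (fun x hx => ?_) ((intervalIntegrable_ofReal_mul_cexp hf hf').const_mul _)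
    exact (((hderiv x hx).ofReal_comp).const_mul (2 * π * I)).cexp.congr_deriv (by ring)
  have hdiff : ‖cexp (2 * π * I * f q) - cexp (2 * π * I * f p)‖ ≤ 2 := by
    refine (norm_sub_le _ _).trans ?_
    rw [norm_cexp_two_pi_I_mul_ofReal, norm_cexp_two_pi_I_mul_ofReal]
    norm_num
  have h2pi : ‖(2 * π * I : ℂ)‖ = 2 * π := by
    simp [abs_of_pos Real.pi_pos]
  rw [intervalIntegral.integral_const_mul] at hftc
  have hnorm := congrArg norm hftc
  rw [norm_mul, h2pi] at hnorm
  calc ‖∫ x in p..q, (f' x : ℂ) * cexp (2 * π * I * f x)‖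
      = ‖cexp (2 * π * I * f q) - cexp (2 * π * I * f p)‖ / (2 * π) := by
        rw [← hnorm]; field_simp
    _ ≤ 2 / (2 * π) := by gcongr
    _ = π⁻¹ := by field_simp

theorem norm_integral_cexp_le_of_le_deriv {a b Λ : ℝ} (hab : a ≤ b) (hΛ : 0 < Λ)
    (hderiv : ∀ x ∈ Icc a b, HasDerivAt f (f' x) x)
    (hmono : MonotoneOn f' (Icc a b) ∨ AntitoneOn f' (Icc a b))
    (hf' : ∀ x ∈ Icc a b, Λ ≤ f' x) :
    ‖∫ x in a..b, cexp (2 * π * I * f x)‖ ≤ Λ⁻¹ * π⁻¹ := by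
  have hpos : ∀ x ∈ Icc a b, 0 < f' x := fun x hx => hΛ.trans_le (hf' x hx)
  have hint : ∀ p q, a ≤ p → p ≤ q → q ≤ b → IntervalIntegrable f' volume p q := by
    intro p q hap hpq hqb
    have hsub : uIcc p q ⊆ Icc a b := by rw [uIcc_of_le hpq]; exact Icc_subset_Icc hap hqb
    exact hmono.elim (fun h => (h.mono hsub).intervalIntegrable)
      (fun h => (h.mono hsub).intervalIntegrable)
  have hsubinterval : ∀ p q, a ≤ p → p ≤ q → q ≤ b →
      ‖∫ x in p..q, (f' x : ℂ) * cexp (2 * π * I * f x)‖ ≤ π⁻¹ := by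
    intro p q hap hpq hqb
    refine norm_integral_ofReal_mul_cexp_le (fun x hx => hderiv x ?_) (hint p q hap hpq hqb)
    rw [uIcc_of_le hpq] at hx
    exact ⟨hap.trans hx.1, hx.2.trans hqb⟩
  have hweight : MonotoneOn (fun x => (f' x)⁻¹) (Icc a b) ∨
      AntitoneOn (fun x => (f' x)⁻¹) (Icc a b) := hmono.symm.imp
    (fun h x hx y hy hxy => inv_anti₀ (hpos y hy) (h hx hy hxy))
    (fun h x hx y hy hxy => inv_anti₀ (hpos x hx) (h hx hy hxy))
  have hfactor : EqOn (fun x => (f' x)⁻¹ • ((f' x : ℂ) * cexp (2 * π * I * f x)))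
      (fun x => cexp (2 * π * I * f x)) (uIcc a b) := by
    intro x hx
    rw [uIcc_of_le hab] at hx
    simp [real_smul, (hpos x hx).ne']
  rw [← intervalIntegral.integral_congr hfactor]
  exact norm_intervalIntegral_smul_le_of_monotoneOn_or_antitoneOn hab
    (intervalIntegrable_ofReal_mul_cexp
      (fun x hx => (hderiv x (by rwa [uIcc_of_le hab] at hx)).continuousAt.continuousWithinAt)
      (hint a b le_rfl hab le_rfl))
    hweight (fun x hx => (inv_pos.2 (hpos x hx)).le) (fun x hx => inv_anti₀ hΛ (hf' x hx))
    hsubinterval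

end Oscillatory

/-- First derivative bound for oscillatory integrals: if `f` is differentiable on `[a,b]`
with monotone derivative `f'` satisfying `|f'| ≥ Λ > 0` there, then
`|∫_a^b e^{2πi f(x)} dx| ≤ 2/Λ`. -/
theorem first_derivative_bound (a b Λ : ℝ) (hab : a < b) (hΛ : 0 < Λ)
    (f f' : ℝ → ℝ)
    (hderiv : ∀ x ∈ Set.Icc a b, HasDerivAt f (f' x) x)
    (hmono : MonotoneOn f' (Set.Icc a b) ∨ AntitoneOn f' (Set.Icc a b))
    (hbound : ∀ x ∈ Set.Icc a b, Λ ≤ |f' x|) :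
    ‖∫ x in a..b, Complex.exp (2 * Real.pi * Complex.I * (f x))‖ ≤ 2 / Λ := by
  have hπ : Λ⁻¹ * π⁻¹ ≤ 2 / Λ := by
    rw [div_eq_inv_mul]
    gcongr
    exact (inv_le_one_of_one_le₀ (by linarith [Real.pi_gt_three])).trans one_le_two
  refine le_trans ?_ hπ
  have hne : ∀ x ∈ Icc a b, f' x ≠ 0 := fun x hx h0 => by
    linarith [hbound x hx, abs_eq_zero.2 h0]
  rcases hasDerivWithinAt_forall_lt_or_forall_gt_of_forall_ne (convex_Icc a b)
    (fun x hx => (hderiv x hx).hasDerivWithinAt) hne with hneg | hpos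
  · have key := norm_integral_cexp_le_of_le_deriv hab.le hΛ (f := fun x => -f x)
      (fun x hx => (hderiv x hx).neg) (hmono.symm.imp (fun h => h.neg) (fun h => h.neg))
      (fun x hx => by simpa [abs_of_neg (hneg x hx)] using hbound x hx)
    simpa only [cexp_two_pi_I_mul_ofReal_neg, intervalIntegral.intervalIntegral_conj,
      RCLike.norm_conj] using key
  · exact norm_integral_cexp_le_of_le_deriv hab.le hΛ hderiv hmono
      (fun x hx => by simpa [abs_of_pos (hpos x hx)] using hbound x hx)
end

section
/- Splitting of an integral into short pieces with an enlarged range of shifts: Let T > 0, X > 0, and let ξ ∈ [X, 2X]. Let V : ℝ → ℝ be a nonnegative measurable function with V(x) = 1 for every x ∈ [0,1]. Then for every measurable function F : ℝ → [0,∞], ∫_{2T}^{3T} F(t) dt ≤ Σ_{r ∈ ℤ, T/(2X) − 1 ≤ r ≤ 2T/X} ∫_ℝ F(t) · V((t − T − rξ)/ξ) dt. -/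
/-!
Each `t ∈ [2T, 3T]` lies in the window `[T + rξ, T + (r + 1)ξ]` with `r = ⌊(t - T)/ξ⌋`, and
`ξ ∈ [X, 2X]` forces `T/(2X) - 1 ≤ r ≤ 2T/X`. On that window the weight
`V((t - T - rξ)/ξ)` equals `1`, so the integral over `[2T, 3T]` is bounded by the sum over the
windows, and each window integral by the corresponding weighted integral over `ℝ`.
-/

open MeasureTheory Set

theorem MeasureTheory.setLIntegral_le_sum_of_subset_biUnion {α ι : Type*} [MeasurableSpace α]
    {μ : Measure α} (f : α → ENNReal) {A : Set α} (s : Finset ι) (B : ι → Set α)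
    (hA : A ⊆ ⋃ i ∈ s, B i) :
    ∫⁻ a in A, f a ∂μ ≤ ∑ i ∈ s, ∫⁻ a in B i, f a ∂μ :=
  calc ∫⁻ a in A, f a ∂μ ≤ ∫⁻ a in ⋃ i : s, B i, f a ∂μ := by
        rw [iUnion_subtype]
        exact lintegral_mono_set hA
    _ ≤ ∑' i : s, ∫⁻ a in B i, f a ∂μ := lintegral_iUnion_le _ f
    _ = ∑ i ∈ s, ∫⁻ a in B i, f a ∂μ := Finset.tsum_subtype s fun i => ∫⁻ a in B i, f a ∂μ

theorem mem_Icc_add_floor_div_mul {ξ : ℝ} (hξ : 0 < ξ) (a t : ℝ) :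
    t ∈ Icc (a + ⌊(t - a) / ξ⌋ * ξ) (a + ⌊(t - a) / ξ⌋ * ξ + ξ) := by
  have hle : (⌊(t - a) / ξ⌋ : ℝ) * ξ ≤ t - a := (le_div_iff₀ hξ).1 (Int.floor_le _)
  have hlt : t - a < (⌊(t - a) / ξ⌋ + 1 : ℝ) * ξ := (div_lt_iff₀ hξ).1 (Int.lt_floor_add_one _)
  constructor <;> linarith

theorem floor_div_mem_Icc_shifts {T X ξ t : ℝ} (hX : 0 < X) (hξ : ξ ∈ Icc X (2 * X))
    (ht : t ∈ Icc (2 * T) (3 * T)) :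
    ⌊(t - T) / ξ⌋ ∈ Finset.Icc ⌈T / (2 * X) - 1⌉ ⌊2 * T / X⌋ := by
  obtain ⟨hXξ, hξX⟩ := hξ
  obtain ⟨ht₁, ht₂⟩ := ht
  have hξ₀ : 0 < ξ := hX.trans_le hXξ
  have hT : 0 ≤ T := by linarith
  have hlower : T / (2 * X) ≤ (t - T) / ξ :=
    calc T / (2 * X) ≤ T / ξ := by gcongr
      _ ≤ (t - T) / ξ := by gcongr; linarith
  have hupper : (t - T) / ξ ≤ 2 * T / X :=
    calc (t - T) / ξ ≤ 2 * T / ξ := by gcongr; linarith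
      _ ≤ 2 * T / X := by gcongr
  rw [Finset.mem_Icc, Int.ceil_le]
  exact ⟨by linarith [Int.sub_one_lt_floor ((t - T) / ξ)], Int.floor_le_floor hupper⟩

theorem setLIntegral_Icc_le_lintegral_mul_rescaled {V : ℝ → ℝ} (hV : ∀ x ∈ Icc (0 : ℝ) 1, V x = 1)
    {ξ : ℝ} (hξ : 0 < ξ) (a : ℝ) (F : ℝ → ENNReal) :
    ∫⁻ t in Icc a (a + ξ), F t ≤ ∫⁻ t, F t * ENNReal.ofReal (V ((t - a) / ξ)) := by
  have hweight : ∀ t ∈ Icc a (a + ξ), F t = F t * ENNReal.ofReal (V ((t - a) / ξ)) := by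
    rintro t ⟨ht₁, ht₂⟩
    have hunit : (t - a) / ξ ∈ Icc (0 : ℝ) 1 :=
      ⟨div_nonneg (by linarith) hξ.le, (div_le_one hξ).2 (by linarith)⟩
    rw [hV _ hunit, ENNReal.ofReal_one, mul_one]
  rw [setLIntegral_congr_fun measurableSet_Icc hweight]
  exact setLIntegral_le_lintegral _ _

theorem split_integral_shifts_general (T X ξ : ℝ) (hX : 0 < X)
    (hξ : ξ ∈ Set.Icc X (2 * X))
    (V : ℝ → ℝ)
    (hVone : ∀ x ∈ Set.Icc (0 : ℝ) 1, V x = 1)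
    (F : ℝ → ENNReal) :
    ∫⁻ t in Set.Icc (2 * T) (3 * T), F t ≤
      ∑ r ∈ Finset.Icc ⌈T / (2 * X) - 1⌉ ⌊2 * T / X⌋,
        ∫⁻ t : ℝ, F t * ENNReal.ofReal (V ((t - T - (r : ℝ) * ξ) / ξ)) := by
  have hξ₀ : 0 < ξ := hX.trans_le hξ.1
  calc ∫⁻ t in Icc (2 * T) (3 * T), F t
      ≤ ∑ r ∈ Finset.Icc ⌈T / (2 * X) - 1⌉ ⌊2 * T / X⌋,
          ∫⁻ t in Icc (T + r * ξ) (T + r * ξ + ξ), F t :=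
        setLIntegral_le_sum_of_subset_biUnion F _ (fun r : ℤ => Icc (T + r * ξ) (T + r * ξ + ξ))
          fun t ht =>
            mem_biUnion (floor_div_mem_Icc_shifts hX hξ ht) (mem_Icc_add_floor_div_mul hξ₀ T t)
    _ ≤ _ := Finset.sum_le_sum fun r _ => by
        simpa only [sub_sub] using setLIntegral_Icc_le_lintegral_mul_rescaled hVone hξ₀ _ F

/-- Splitting of an integral into short pieces with an enlarged range of shifts:
for `T, X > 0`, `ξ ∈ [X, 2X]`, and `V ≥ 0` with `V = 1` on `[0,1]`, every nonnegative
measurable `F` satisfies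
`∫_{2T}^{3T} F(t) dt ≤ ∑_{T/(2X) − 1 ≤ r ≤ 2T/X} ∫_ℝ F(t) V((t − T − rξ)/ξ) dt`. -/
theorem split_integral_shifts (T X ξ : ℝ) (hT : 0 < T) (hX : 0 < X)
    (hξ : ξ ∈ Set.Icc X (2 * X))
    (V : ℝ → ℝ) (hVmeas : Measurable V) (hVnonneg : ∀ x, 0 ≤ V x)
    (hVone : ∀ x ∈ Set.Icc (0 : ℝ) 1, V x = 1)
    (F : ℝ → ENNReal) (hF : Measurable F) :
    ∫⁻ t in Set.Icc (2 * T) (3 * T), F t ≤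
      ∑ r ∈ Finset.Icc ⌈T / (2 * X) - 1⌉ ⌊2 * T / X⌋,
        ∫⁻ t : ℝ, F t * ENNReal.ofReal (V ((t - T - (r : ℝ) * ξ) / ξ)) :=
  split_integral_shifts_general T X ξ hX hξ V hVone F
end
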